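/- Let k be an integer with 1 ≤ k < n, let β_0, …, β_{k−1} and α_0, …, α_k be complex numbers, and set N_E(z) = β_0 + β_1 z + … + β_{k−1} z^{k−1} and D_E(z) = α_0 + α_1 z + … + α_k z^k. Then the polynomials N_f = z·B_n^{♯n}·N_E + A_n·D_E and D_f = z·A_n^{♯n}·N_E + B_n·D_E both have degree at most k if and only if for every ℓ with 0 ≤ ℓ ≤ n−1 both of the following hold: Σ_{j=0}^{min(n−ℓ−1, k−1)} conj(b_{n−ℓ−j−1})·β_{k−j−1} + Σ_{j=0}^{min(n−ℓ−1, k)} a_{ℓ+j+1}·α_{k−j} = 0 and Σ_{j=0}^{min(n−ℓ−1, k−1)} conj(a_{n−ℓ−j−1})·β_{k−j−1} + Σ_{j=0}^{min(n−ℓ−1, k)} b_{ℓ+j+1}·α_{k−j} = 0. (These are the necessary and sufficient conditions of Step 4″ of the algorithm for the case k < n.) -/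

import Mathlib

open Polynomial

/-! Both `N_f` and `D_f` have degree at most `n + k`, so each has degree at most `k` exactly when
its coefficients of `z^(k+ℓ+1)`, `ℓ < n`, vanish. Expanding the products coefficientwise, these
coefficients are the two sums of the statement, the ranges being cut at `min (n-ℓ-1) _` because
`A_n`, `B_n` and their reflections have degree at most `n`. -/

/-- The pair `(A_j, B_j)` of polynomials from the recursion (1.8a):
`A_0 = γ_n`, `B_0 = 1`, `A_{j+1}(z) = z·A_j(z) + γ_{n-j-1}·B_j(z)`,
`B_{j+1}(z) = z·conj(γ_{n-j-1})·A_j(z) + B_j(z)`. -/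
noncomputable def schurAB (γ : ℕ → ℂ) (n : ℕ) : ℕ → Polynomial ℂ × Polynomial ℂ
  | 0 => (C (γ n), 1)
  | j + 1 =>
      (X * (schurAB γ n j).1 + C (γ (n - j - 1)) * (schurAB γ n j).2,
       X * C (starRingEnd ℂ (γ (n - j - 1))) * (schurAB γ n j).1 + (schurAB γ n j).2)

/-- The reflection `P^{♯k}`: the coefficient of `z^j` is `conj` of the coefficient of
`z^{k-j}` of `P`, i.e. `P^{♯k}(z) = z^k · conj(P(1/conj z))` for `P` of degree ≤ k. -/
noncomputable def sharp (k : ℕ) (P : Polynomial ℂ) : Polynomial ℂ :=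
  ∑ j ∈ Finset.range (k + 1), C (starRingEnd ℂ (P.coeff (k - j))) * X ^ j

section

variable {R : Type*} [Semiring R]

lemma natDegree_sum_range_C_mul_X_pow_le (c : ℕ → R) (m : ℕ) :
    (∑ j ∈ Finset.range (m + 1), C (c j) * X ^ j).natDegree ≤ m :=
  natDegree_sum_le_of_forall_le _ _ fun _ hj =>
    (natDegree_C_mul_X_pow_le _ _).trans (Nat.lt_succ_iff.mp (Finset.mem_range.mp hj))

lemma coeff_mul_sum_range_C_mul_X_pow (P : R[X]) (c : ℕ → R) {m d : ℕ} (h : m ≤ d + 1) :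
    (P * ∑ j ∈ Finset.range m, C (c j) * X ^ j).coeff d
      = ∑ j ∈ Finset.range m, P.coeff (d - j) * c j := by
  rw [Finset.mul_sum, finsetSum_coeff]
  refine Finset.sum_congr rfl fun j hj => ?_
  have hjd : j ≤ d := by rw [Finset.mem_range] at hj; omega
  rw [← mul_assoc, coeff_mul_X_pow', if_pos hjd, coeff_mul_C]

lemma coeff_mul_sum_range_C_mul_X_pow_add {n : ℕ} {P : R[X]} (hP : P.natDegree ≤ n)
    (c : ℕ → R) (m : ℕ) {ℓ : ℕ} (hℓ : ℓ < n) :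
    (P * ∑ j ∈ Finset.range (m + 1), C (c j) * X ^ j).coeff (m + ℓ + 1)
      = ∑ i ∈ Finset.range (min (n - ℓ - 1) m + 1), P.coeff (ℓ + i + 1) * c (m - i) := by
  rw [coeff_mul_sum_range_C_mul_X_pow P c (by omega), ← Finset.sum_range_reflect]
  refine (Finset.sum_subset (Finset.range_subset_range.mpr (by omega)) fun i hi hi' => ?_).symm
    |>.trans (Finset.sum_congr rfl fun i hi => ?_)
  · rw [Finset.mem_range] at hi hi'
    rw [coeff_eq_zero_of_natDegree_lt (by omega), zero_mul]
  · rw [Finset.mem_range] at hi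
    rw [show m + ℓ + 1 - (m + 1 - 1 - i) = ℓ + i + 1 by omega,
      show m + 1 - 1 - i = m - i by omega]

lemma natDegree_le_iff_coeff_add_eq_zero {F : R[X]} {k n : ℕ} (hF : F.natDegree ≤ n + k) :
    F.natDegree ≤ k ↔ ∀ ℓ < n, F.coeff (k + ℓ + 1) = 0 := by
  refine ⟨fun h ℓ _ => coeff_eq_zero_of_natDegree_lt (by omega), fun h => ?_⟩
  refine natDegree_le_iff_coeff_eq_zero.mpr fun N hN => ?_
  by_cases hNn : N ≤ n + k
  · simpa [show k + (N - k - 1) + 1 = N by omega] using h (N - k - 1) (by omega)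
  · exact coeff_eq_zero_of_natDegree_lt (by omega)

end

lemma coeff_sharp (k : ℕ) (P : ℂ[X]) (j : ℕ) :
    (sharp k P).coeff j = if j ≤ k then starRingEnd ℂ (P.coeff (k - j)) else 0 := by
  simp only [sharp, finsetSum_coeff, coeff_C_mul_X_pow, Finset.sum_ite_eq, Finset.mem_range,
    Nat.lt_succ_iff]

lemma natDegree_sharp_le (k : ℕ) (P : ℂ[X]) : (sharp k P).natDegree ≤ k :=
  natDegree_le_iff_coeff_eq_zero.mpr fun j hj => by rw [coeff_sharp, if_neg (by omega)]

lemma natDegree_schurAB_le (γ : ℕ → ℂ) (n j : ℕ) :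
    (schurAB γ n j).1.natDegree ≤ j ∧ (schurAB γ n j).2.natDegree ≤ j := by
  induction j with
  | zero => simp [schurAB]
  | succ j ih =>
    have hX : (X : ℂ[X]).natDegree ≤ 1 := natDegree_X_le
    have hXC (z : ℂ) : (X * C z).natDegree ≤ 1 :=
      (natDegree_mul_le_of_le hX (natDegree_C z).le).trans_eq (add_zero 1)
    refine ⟨natDegree_add_le_of_degree_le ?_ ?_,
      natDegree_add_le_of_degree_le ?_ (ih.2.trans j.le_succ)⟩
    · exact (natDegree_mul_le_of_le hX ih.1).trans_eq (add_comm 1 j)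
    · exact (natDegree_mul_le_of_le (natDegree_C _).le ih.2).trans (by omega)
    · exact (natDegree_mul_le_of_le (hXC _) ih.1).trans_eq (add_comm 1 j)

section

variable {n : ℕ} {P Q : ℂ[X]} (hP : P.natDegree ≤ n) (β α : ℕ → ℂ) {m : ℕ}
include hP

lemma natDegree_X_mul_sharp_add_le :
    (X * sharp n Q * ∑ j ∈ Finset.range (m + 1), C (β j) * X ^ j
      + P * ∑ j ∈ Finset.range (m + 2), C (α j) * X ^ j).natDegree ≤ n + (m + 1) := by
  refine natDegree_add_le_of_degree_le ?_
    (natDegree_mul_le_of_le hP (natDegree_sum_range_C_mul_X_pow_le α _))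
  exact (natDegree_mul_le_of_le (natDegree_mul_le_of_le natDegree_X_le (natDegree_sharp_le n Q))
    (natDegree_sum_range_C_mul_X_pow_le β m)).trans (by omega)

lemma coeff_X_mul_sharp_add {ℓ : ℕ} (hℓ : ℓ < n) :
    (X * sharp n Q * ∑ j ∈ Finset.range (m + 1), C (β j) * X ^ j
      + P * ∑ j ∈ Finset.range (m + 2), C (α j) * X ^ j).coeff (m + 1 + ℓ + 1)
      = (∑ j ∈ Finset.range (min (n - ℓ - 1) m + 1),
          starRingEnd ℂ (Q.coeff (n - ℓ - j - 1)) * β (m - j)) +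
        ∑ j ∈ Finset.range (min (n - ℓ - 1) (m + 1) + 1),
          P.coeff (ℓ + j + 1) * α (m + 1 - j) := by
  rw [coeff_add, coeff_mul_sum_range_C_mul_X_pow_add hP α (m + 1) hℓ, mul_assoc,
    show m + 1 + ℓ + 1 = (m + ℓ + 1) + 1 by ring, coeff_X_mul,
    coeff_mul_sum_range_C_mul_X_pow_add (natDegree_sharp_le n Q) β m hℓ]
  congr 1
  refine Finset.sum_congr rfl fun j hj => ?_
  rw [Finset.mem_range] at hj
  rw [coeff_sharp, if_pos (by omega), show n - (ℓ + j + 1) = n - ℓ - j - 1 by omega]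

end

theorem stmt_18_general (n : ℕ) (γ : ℕ → ℂ)
    (a b : ℕ → ℂ) (ha : ∀ j, a j = ((schurAB γ n n).1).coeff j)
    (hb : ∀ j, b j = ((schurAB γ n n).2).coeff j)
    (k : ℕ) (hk1 : 1 ≤ k) (β α : ℕ → ℂ)
    (NE DE : Polynomial ℂ)
    (hNE : NE = ∑ j ∈ Finset.range k, C (β j) * X ^ j)
    (hDE : DE = ∑ j ∈ Finset.range (k + 1), C (α j) * X ^ j) :
    ((X * sharp n (schurAB γ n n).2 * NE + (schurAB γ n n).1 * DE).natDegree ≤ k ∧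
     (X * sharp n (schurAB γ n n).1 * NE + (schurAB γ n n).2 * DE).natDegree ≤ k) ↔
    ∀ ℓ < n,
      ((∑ j ∈ Finset.range (min (n - ℓ - 1) (k - 1) + 1),
          starRingEnd ℂ (b (n - ℓ - j - 1)) * β (k - j - 1)) +
       (∑ j ∈ Finset.range (min (n - ℓ - 1) k + 1),
          a (ℓ + j + 1) * α (k - j)) = 0) ∧
      ((∑ j ∈ Finset.range (min (n - ℓ - 1) (k - 1) + 1),
          starRingEnd ℂ (a (n - ℓ - j - 1)) * β (k - j - 1)) +
       (∑ j ∈ Finset.range (min (n - ℓ - 1) k + 1),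
          b (ℓ + j + 1) * α (k - j)) = 0) := by
  obtain ⟨m, rfl⟩ : ∃ m, k = m + 1 := ⟨k - 1, by omega⟩
  subst hNE hDE
  obtain ⟨hA, hB⟩ := natDegree_schurAB_le γ n n
  rw [natDegree_le_iff_coeff_add_eq_zero (natDegree_X_mul_sharp_add_le hA β α),
    natDegree_le_iff_coeff_add_eq_zero (natDegree_X_mul_sharp_add_le hB β α), ← forall₂_and]
  refine forall₂_congr fun ℓ hℓ => ?_
  rw [coeff_X_mul_sharp_add hA β α hℓ, coeff_X_mul_sharp_add hB β α hℓ]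
  have hsub (j : ℕ) : m + 1 - j - 1 = m - j := by omega
  simp only [ha, hb, hsub, Nat.add_sub_cancel]

/-- Step 4″, case `k < n`: let `1 ≤ k < n`, `N_E = Σ_{j<k} β_j z^j`,
`D_E = Σ_{j≤k} α_j z^j`. Then `N_f = z·B_n^{♯n}·N_E + A_n·D_E` and
`D_f = z·A_n^{♯n}·N_E + B_n·D_E` both have degree at most `k` if and only if for every
`0 ≤ ℓ ≤ n-1` both
`Σ_{j=0}^{min(n-ℓ-1,k-1)} conj(b_{n-ℓ-j-1})·β_{k-j-1}
  + Σ_{j=0}^{min(n-ℓ-1,k)} a_{ℓ+j+1}·α_{k-j} = 0` and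
`Σ_{j=0}^{min(n-ℓ-1,k-1)} conj(a_{n-ℓ-j-1})·β_{k-j-1}
  + Σ_{j=0}^{min(n-ℓ-1,k)} b_{ℓ+j+1}·α_{k-j} = 0` hold,
where `a_j`, `b_j` are the coefficients of `A_n`, `B_n`. -/
theorem stmt_18 (n : ℕ) (hn : 1 ≤ n) (γ : ℕ → ℂ)
    (hγ : ∀ j ≤ n, ‖γ j‖ < 1)
    (a b : ℕ → ℂ) (ha : ∀ j, a j = ((schurAB γ n n).1).coeff j)
    (hb : ∀ j, b j = ((schurAB γ n n).2).coeff j)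
    (k : ℕ) (hk1 : 1 ≤ k) (hkn : k < n) (β α : ℕ → ℂ)
    (NE DE : Polynomial ℂ)
    (hNE : NE = ∑ j ∈ Finset.range k, C (β j) * X ^ j)
    (hDE : DE = ∑ j ∈ Finset.range (k + 1), C (α j) * X ^ j) :
    ((X * sharp n (schurAB γ n n).2 * NE + (schurAB γ n n).1 * DE).natDegree ≤ k ∧
     (X * sharp n (schurAB γ n n).1 * NE + (schurAB γ n n).2 * DE).natDegree ≤ k) ↔
    ∀ ℓ < n,
      ((∑ j ∈ Finset.range (min (n - ℓ - 1) (k - 1) + 1),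
          starRingEnd ℂ (b (n - ℓ - j - 1)) * β (k - j - 1)) +
       (∑ j ∈ Finset.range (min (n - ℓ - 1) k + 1),
          a (ℓ + j + 1) * α (k - j)) = 0) ∧
      ((∑ j ∈ Finset.range (min (n - ℓ - 1) (k - 1) + 1),
          starRingEnd ℂ (a (n - ℓ - j - 1)) * β (k - j - 1)) +
       (∑ j ∈ Finset.range (min (n - ℓ - 1) k + 1),
          b (ℓ + j + 1) * α (k - j)) = 0) :=
  stmt_18_general n γ a b ha hb k hk1 β α NE DE hNE hDE
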